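/- arXiv:2604.17520 — 3 statements merged into one kernel-verified Lean document; each statement's English description precedes it below -/
import Mathlib

section
/- Consider the height-3 configuration p_{0,1} = 0, p_{1,1} = −√2/2 + 𝕚, p_{1,2} = √2/2 + 𝕚, p_{2,1} = −√2/2 + 2𝕚, p_{2,2} = √2/2 + 2𝕚, p_{3,1} = 3𝕚, with n_0 = n_3 = 1, n_1 = n_2 = 2, c_k = 1/n_k. Then the force at the neck (1,1), namely F_{1,1} = 2·(1/2)²/(p_{1,1} − p_{1,2}) − (1/2)·(1/2)·[1/(p_{1,1} − p_{2,1}) + 1/(p_{1,1} − p_{2,2})] − (1/2)·1·[1/(p_{1,1} − p_{0,1})], equals 0. -/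
open Complex Real

/-- Balancing at the neck `(1,1)` of the height-3 configuration:
with `p_{0,1}=0`, `p_{1,1}=−√2/2+𝕚`, `p_{1,2}=√2/2+𝕚`, `p_{2,1}=−√2/2+2𝕚`,
`p_{2,2}=√2/2+2𝕚`, the force `F_{1,1}` vanishes. -/
theorem stmt_14 (p01 p11 p12 p21 p22 : ℂ)
    (h01 : p01 = 0)
    (h11 : p11 = -(Real.sqrt 2 / 2 : ℝ) + Complex.I)
    (h12 : p12 = (Real.sqrt 2 / 2 : ℝ) + Complex.I)
    (h21 : p21 = -(Real.sqrt 2 / 2 : ℝ) + 2 * Complex.I)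
    (h22 : p22 = (Real.sqrt 2 / 2 : ℝ) + 2 * Complex.I) :
    2 * (1 / 2 : ℂ) ^ 2 / (p11 - p12) -
      (1 / 2 : ℂ) * (1 / 2) * (1 / (p11 - p21) + 1 / (p11 - p22)) -
      (1 / 2 : ℂ) * 1 * (1 / (p11 - p01)) = 0 := by
  subst h01 h11 h12 h21 h22
  set s : ℂ := ((Real.sqrt 2 : ℝ) : ℂ) with hsdef
  have hs : s ^ 2 = 2 := by
    rw [hsdef]; norm_cast; rw [Real.sq_sqrt]; norm_num
  have hsim : s.im = 0 := by simp [hsdef]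
  have hs0 : s ≠ 0 := by
    intro h; rw [h] at hs; norm_num at hs
  push_cast
  have h1 : (-(s/2) + Complex.I) - (s/2 + Complex.I) ≠ 0 := by
    intro h; apply hs0; linear_combination -h
  have h2 : (-(s/2) + Complex.I) - (-(s/2) + 2*Complex.I) ≠ 0 := by
    intro h
    have h' := congrArg Complex.im h
    simp at h'
    linarith
  have h3 : (-(s/2) + Complex.I) - (s/2 + 2*Complex.I) ≠ 0 := by
    intro h
    have h' := congrArg Complex.im h
    simp [hsim] at h'
    linarith
  have h4 : (-(s/2) + Complex.I) - 0 ≠ 0 := by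
    intro h
    have h' := congrArg Complex.im h
    simp [hsim] at h'
  field_simp [h1, h2, h3, h4]
  have h5 : (-(s*2) - Complex.I*2) ≠ 0 := by
    intro h
    have h' := congrArg Complex.im h
    simp [hsim] at h'
  have h6 : (-s + Complex.I*2) ≠ 0 := by
    intro h
    have h' := congrArg Complex.im h
    simp [hsim] at h'
  ring_nf
  field_simp [hs0, Complex.I_ne_zero, h5, h6]
  have hs' : ((Real.sqrt 2 : ℝ) : ℂ) ^ 2 = 2 := hs
  have hi1 : (-((Real.sqrt 2 : ℝ) : ℂ) - Complex.I)⁻¹ = (-((Real.sqrt 2 : ℝ) : ℂ) + Complex.I) / 3 := by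
    apply inv_eq_of_mul_eq_one_right
    linear_combination (1/3 : ℂ) * hs' - (1/3 : ℂ) * Complex.I_sq
  have hi2 : (-((Real.sqrt 2 : ℝ) : ℂ) + Complex.I * 2)⁻¹ = (-((Real.sqrt 2 : ℝ) : ℂ) - 2 * Complex.I) / 6 := by
    apply inv_eq_of_mul_eq_one_right
    linear_combination (1/6 : ℂ) * hs' - (4/6 : ℂ) * Complex.I_sq
  rw [div_eq_mul_inv _ (-((Real.sqrt 2 : ℝ) : ℂ) - Complex.I), div_eq_mul_inv _ (-((Real.sqrt 2 : ℝ) : ℂ) + Complex.I * 2), hi1, hi2]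
  linear_combination Complex.I * hs' + ((Real.sqrt 2 : ℝ) : ℂ) * Complex.I_sq
end

section
/- Let n ≥ 1 and p_j = 𝕚 + cot(jπ/(n+1)) for 1 ≤ j ≤ n. Define a_0 = (1/n)∑_{j} 1/p_j and a_1 = (1/n)∑_j 1/p_j². Then the quantity R = 3a_1 + 3a_0² (the residue at 0 of (1/z − (1/n)∑_j 1/(z − p_j))³) is real. -/
open Real Complex Finset

lemma cot_pi_sub (x : ℝ) : Real.cot (π - x) = - Real.cot x := by
  rw [Real.cot_eq_cos_div_sin, Real.cot_eq_cos_div_sin, Real.cos_pi_sub, Real.sin_pi_sub,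
    neg_div]

/-- With `p_j = 𝕚 + cot(jπ/(n+1))`, `a₀ = (1/n)∑ 1/p_j` and `a₁ = (1/n)∑ 1/p_j²`,
the quantity `R = 3a₁ + 3a₀²` is real. -/
theorem stmt_16 (n : ℕ) (hn : 1 ≤ n)
    (p : ℕ → ℂ) (hp : ∀ j, p j = Complex.I + (Real.cot (j * π / (n + 1)) : ℂ))
    (a0 a1 : ℂ)
    (ha0 : a0 = (1 / n : ℂ) * ∑ j ∈ Finset.Icc 1 n, (p j)⁻¹)
    (ha1 : a1 = (1 / n : ℂ) * ∑ j ∈ Finset.Icc 1 n, ((p j) ^ 2)⁻¹) :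
    (3 * a1 + 3 * a0 ^ 2).im = 0 := by
  -- key symmetry
  have hsym : ∀ j ∈ Finset.Icc 1 n, p (n + 1 - j) = - (starRingEnd ℂ) (p j) := by
    intro j hj
    simp only [Finset.mem_Icc] at hj
    have hcast : ((n + 1 - j : ℕ) : ℝ) = (n : ℝ) + 1 - j := by
      have : j ≤ n + 1 := by omega
      push_cast [Nat.cast_sub this]
      ring
    have hne : (n : ℝ) + 1 ≠ 0 := by positivity
    have hang : ((n + 1 - j : ℕ) : ℝ) * π / (n + 1) = π - j * π / (n + 1) := by
      rw [hcast]; field_simp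
    rw [hp, hp, hang, cot_pi_sub]
    rw [Complex.ofReal_neg]
    simp only [map_add, Complex.conj_I, Complex.conj_ofReal]
    ring
  -- conj of the sums
  have hconj0 : (starRingEnd ℂ) (∑ j ∈ Finset.Icc 1 n, (p j)⁻¹)
      = - ∑ j ∈ Finset.Icc 1 n, (p j)⁻¹ := by
    rw [map_sum, ← Finset.sum_neg_distrib]
    refine Finset.sum_nbij' (fun j => n + 1 - j) (fun j => n + 1 - j) ?_ ?_ ?_ ?_ ?_
    · intro j hj; simp only [Finset.mem_Icc] at *; omega
    · intro j hj; simp only [Finset.mem_Icc] at *; omega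
    · intro j hj; simp only [Finset.mem_Icc] at hj; show n + 1 - (n + 1 - j) = j; omega
    · intro j hj; simp only [Finset.mem_Icc] at hj; show n + 1 - (n + 1 - j) = j; omega
    · intro j hj
      show (starRingEnd ℂ) (p j)⁻¹ = -(p (n + 1 - j))⁻¹
      rw [hsym _ hj, inv_neg, neg_neg, map_inv₀]
  have hconj1 : (starRingEnd ℂ) (∑ j ∈ Finset.Icc 1 n, ((p j) ^ 2)⁻¹)
      = ∑ j ∈ Finset.Icc 1 n, ((p j) ^ 2)⁻¹ := by
    rw [map_sum]
    refine Finset.sum_nbij' (fun j => n + 1 - j) (fun j => n + 1 - j) ?_ ?_ ?_ ?_ ?_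
    · intro j hj; simp only [Finset.mem_Icc] at *; omega
    · intro j hj; simp only [Finset.mem_Icc] at *; omega
    · intro j hj; simp only [Finset.mem_Icc] at hj; show n + 1 - (n + 1 - j) = j; omega
    · intro j hj; simp only [Finset.mem_Icc] at hj; show n + 1 - (n + 1 - j) = j; omega
    · intro j hj
      show (starRingEnd ℂ) (p j ^ 2)⁻¹ = (p (n + 1 - j) ^ 2)⁻¹
      rw [hsym _ hj]
      simp [map_inv₀, map_pow, neg_sq]
  -- a0 purely imaginary, a1 real
  have hre0 : a0.re = 0 := by
    have h := congrArg Complex.re hconj0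
    simp only [Complex.conj_re, Complex.neg_re] at h
    have : (∑ j ∈ Finset.Icc 1 n, (p j)⁻¹).re = 0 := by linarith
    rw [ha0]
    simp [Complex.mul_re, this]
  have him1 : a1.im = 0 := by
    have h := congrArg Complex.im hconj1
    simp only [Complex.conj_im] at h
    have : (∑ j ∈ Finset.Icc 1 n, ((p j) ^ 2)⁻¹).im = 0 := by linarith
    rw [ha1]
    simp [Complex.mul_im, this]
  have hsq : (a0 ^ 2).im = 0 := by
    rw [sq, Complex.mul_im, hre0]; ring
  simp [Complex.add_im, Complex.mul_im, him1, hsq]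
end

section
/- Let a ∈ ℂ \ {0} and φ(z) = 1/z − 1/(z − a). For every even r ≥ 0 and every θ ∈ ℝ, Im( e^{𝕚(r+1)θ}·X − e^{−𝕚(r+1)θ}·conj(Y) ) with X = Res_{z=a} φ^{r+2} and Y = Res_{z=0} φ^{r+2} vanishes whenever a is purely imaginary. -/
open Complex Real

private lemma conj_intervalIntegral (f : ℝ → ℂ) (a b : ℝ) :
    (starRingEnd ℂ) (∫ t in a..b, f t) = ∫ t in a..b, (starRingEnd ℂ) (f t) := by
  rw [intervalIntegral, intervalIntegral, map_sub, ← integral_conj, ← integral_conj]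

private lemma circleMap_shift_pi (ε : ℝ) (t : ℝ) :
    circleMap 0 ε (t + π) = -circleMap 0 ε t := by
  simp only [circleMap, Complex.ofReal_add, add_mul, Complex.exp_add,
    Complex.exp_pi_mul_I, zero_add]
  ring

private lemma circleMap_conj (ε : ℝ) (t : ℝ) :
    (starRingEnd ℂ) (circleMap 0 ε t) = circleMap 0 ε (-t) := by
  simp only [circleMap, zero_add, map_mul, Complex.conj_ofReal, ← Complex.exp_conj,
    Complex.conj_I, Complex.ofReal_neg]
  ring_nf

/-- For `φ(z) = 1/z − 1/(z−a)` with `a` purely imaginary and nonzero, `r` even,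
and `X = Res_{z=a} φ^{r+2}`, `Y = Res_{z=0} φ^{r+2}` (expressed as normalized
circle integrals), we have `Im(e^{𝕚(r+1)θ}·X − e^{−𝕚(r+1)θ}·conj(Y)) = 0` for
every `θ ∈ ℝ`. -/
theorem stmt_18 (a : ℂ) (ha : a ≠ 0) (haim : a.re = 0)
    (r : ℕ) (hr : Even r) (ε : ℝ) (hε : 0 < ε) (hε' : ε < ‖a‖)
    (X Y : ℂ)
    (hX : X = (2 * π * Complex.I)⁻¹ *
        (∮ z in C(a, ε), ((z⁻¹ - (z - a)⁻¹) ^ (r + 2))))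
    (hY : Y = (2 * π * Complex.I)⁻¹ *
        (∮ z in C(0, ε), ((z⁻¹ - (z - a)⁻¹) ^ (r + 2))))
    (θ : ℝ) :
    (Complex.exp (Complex.I * (r + 1) * θ) * X -
        Complex.exp (-Complex.I * (r + 1) * θ) * (starRingEnd ℂ) Y).im = 0 := by
  have hm : Even (r + 2) := by rcases hr with ⟨k, hk⟩; exact ⟨k + 1, by omega⟩
  set f : ℂ → ℂ := fun z => (z⁻¹ - (z - a)⁻¹) ^ (r + 2) with hf
  -- symmetry f (a - z) = f z
  have hsym : ∀ z : ℂ, f (a - z) = f z := by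
    intro z
    have h1 : (a - z) - a = -z := by ring
    have h2 : (a - z) = -(z - a) := by ring
    simp only [hf, h1, h2, inv_neg]
    ring_nf
  -- conjugation symmetry: conj (f z) = f (-(conj z))
  have hconja : (starRingEnd ℂ) a = -a := by
    apply Complex.ext <;> simp [haim]
  have hconjf : ∀ z : ℂ, (starRingEnd ℂ) (f z) = f (-((starRingEnd ℂ) z)) := by
    intro z
    simp only [hf, map_pow, map_sub, map_inv₀, hconja]
    rw [show -(starRingEnd ℂ) z - a = -((starRingEnd ℂ) z + a) by ring, inv_neg, inv_neg,
      show -((starRingEnd ℂ) z)⁻¹ - -((starRingEnd ℂ) z + a)⁻¹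
        = -(((starRingEnd ℂ) z)⁻¹ - ((starRingEnd ℂ) z + a)⁻¹) by ring, hm.neg_pow]
    congr 1
    ring
  -- the integrand over the circle centered at 0
  set h : ℝ → ℂ := fun t => circleMap 0 ε t * Complex.I * f (circleMap 0 ε t) with hh
  have hper : Function.Periodic h (2 * π) := by
    intro t
    simp only [hh]
    rw [periodic_circleMap 0 ε t]
  have hYint : (∮ z in C(0, ε), f z) = ∫ t in (0:ℝ)..2 * π, h t := by
    simp [circleIntegral, deriv_circleMap, hh, smul_eq_mul]
  -- Step 1 : X = -Y
  have hXint : (∮ z in C(a, ε), f z) = -∮ z in C(0, ε), f z := by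
    rw [hYint]
    simp only [circleIntegral, deriv_circleMap, smul_eq_mul]
    have key : ∀ t : ℝ, circleMap 0 ε t * Complex.I * f (circleMap a ε t) = -h (t + π) := by
      intro t
      have h1 : circleMap a ε t = a - circleMap 0 ε (t + π) := by
        rw [circleMap_shift_pi]
        simp [circleMap]
      rw [h1, hsym, hh]
      simp only [circleMap_shift_pi]
      ring
    calc (∫ t in (0:ℝ)..2 * π, circleMap 0 ε t * Complex.I * f (circleMap a ε t))
        = ∫ t in (0:ℝ)..2 * π, -h (t + π) := by simp only [key]
      _ = -∫ t in (0:ℝ)..2 * π, h (t + π) := by rw [intervalIntegral.integral_neg]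
      _ = -∫ t in (0 + π)..(2 * π + π), h t := by
            rw [intervalIntegral.integral_comp_add_right]
      _ = -∫ t in (0:ℝ)..2 * π, h t := by
            rw [show (2 * π + π) = π + 2 * π by ring, show (0:ℝ) + π = π by ring,
              hper.intervalIntegral_add_eq π 0, zero_add]
  -- Step 2 : conj Y = -Y
  have hconjint : (starRingEnd ℂ) (∮ z in C(0, ε), f z) = ∮ z in C(0, ε), f z := by
    rw [hYint, conj_intervalIntegral]
    have key : ∀ t : ℝ, (starRingEnd ℂ) (h t) = h (π - t) := by
      intro t
      have h1 : circleMap 0 ε (π - t) = -circleMap 0 ε (-t) := by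
        rw [show π - t = -t + π by ring, circleMap_shift_pi]
      simp only [hh, map_mul, Complex.conj_I, circleMap_conj, hconjf, h1]
      ring_nf
    calc (∫ t in (0:ℝ)..2 * π, (starRingEnd ℂ) (h t))
        = ∫ t in (0:ℝ)..2 * π, h (π - t) := by simp only [key]
      _ = ∫ t in (π - 2 * π)..(π - 0), h t := intervalIntegral.integral_comp_sub_left h π
      _ = ∫ t in (0:ℝ)..2 * π, h t := by
            rw [show π - 2 * π = -π by ring, show π - (0:ℝ) = -π + 2 * π by ring,
              hper.intervalIntegral_add_eq (-π) 0, zero_add]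
  have hcY : (starRingEnd ℂ) Y = -Y := by
    rw [hY, map_mul, hconjint, map_inv₀]
    rw [show (starRingEnd ℂ) (2 * ↑π * Complex.I) = -(2 * ↑π * Complex.I) by
      rw [map_mul, map_mul, Complex.conj_I, Complex.conj_ofReal, map_ofNat]; ring]
    rw [inv_neg]
    ring
  have hXY : X = -Y := by rw [hX, hY, hXint]; ring
  have hYre : Y.re = 0 := by
    have h1 := congrArg Complex.re hcY
    simp only [Complex.conj_re, Complex.neg_re] at h1
    linarith
  -- final algebra
  set w : ℂ := Complex.exp (Complex.I * (r + 1) * θ) with hw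
  have hcw : Complex.exp (-Complex.I * (r + 1) * θ) = (starRingEnd ℂ) w := by
    rw [hw, ← Complex.exp_conj]
    congr 1
    simp only [map_mul, Complex.conj_I, map_add, map_natCast, map_one, Complex.conj_ofReal]
  rw [hXY, hcw, hcY, show w * -Y - (starRingEnd ℂ) w * -Y = ((starRingEnd ℂ) w - w) * Y by ring]
  have hre : ((starRingEnd ℂ) w - w).re = 0 := by simp [Complex.sub_re]
  rw [Complex.mul_im, hre, hYre]
  ring
end
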